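/- arXiv:2502.00411 — 3 statements merged into one kernel-verified Lean document; each statement's English description precedes it below -/
import Mathlib

section
/- Let p : T₂ → ℝ be continuous, where T₂ = {(x, y) ∈ [0,1]² : x ≤ y ≤ 1}, and let h : [0,1] → ℝ be continuous. Then there exists a continuous function k : [0,1] → ℝ satisfying the Volterra integral equation k(x) = h(x) − ∫_x^1 p(x, y) k(y) dy for all x ∈ [0,1]. -/
/-!
Extend `p` and `h` continuously (Tietze) and consider the Volterra operator
`T k (x) = h x - ∫_x^1 p(x, y) k(y) dy` on `C([0,1])`. If `|p| ≤ M`, induction on `n` gives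
`|Tⁿ u x - Tⁿ v x| ≤ Mⁿ (1 - x)ⁿ / n! · ‖u - v‖`, so some iterate of `T` is a contraction and
`T` has a fixed point by Banach's theorem.
-/

open Set intervalIntegral Function
open scoped Nat

universe u v

theorem ContinuousOn.exists_continuousMap_eqOn {X : Type u} {Y : Type v} [TopologicalSpace X]
    [NormalSpace X] [TopologicalSpace Y] [TietzeExtension.{u, v} Y] {f : X → Y} {s : Set X}
    (hf : ContinuousOn f s) (hs : IsClosed s) : ∃ g : C(X, Y), EqOn g f s := by
  obtain ⟨g, hg⟩ := ContinuousMap.exists_restrict_eq hs ⟨s.domRestrict f, hf.domRestrict⟩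
  exact ⟨g, fun x hx => ContinuousMap.congr_fun hg ⟨x, hx⟩⟩

theorem integral_sub_pow (x b : ℝ) (n : ℕ) :
    ∫ y in x..b, (b - y) ^ n = (b - x) ^ (n + 1) / (n + 1) := by
  simp [integral_comp_sub_left fun t => t ^ n]

namespace Volterra

variable {a b : ℝ} (hab : a ≤ b) (P : C(ℝ × ℝ, ℝ)) (H : C(ℝ, ℝ))

noncomputable def op (k : C(Icc a b, ℝ)) : C(Icc a b, ℝ) where
  toFun x := H x - ∫ y in (x : ℝ)..b, P (x, y) * IccExtend hab k y
  continuous_toFun := by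
    have hk : Continuous (IccExtend hab k) := k.continuous.Icc_extend'
    simp_rw [integral_symm b]
    fun_prop

theorem op_apply (k : C(Icc a b, ℝ)) (x : Icc a b) :
    op hab P H k x = H x - ∫ y in (x : ℝ)..b, P (x, y) * IccExtend hab k y :=
  rfl

theorem op_apply_sub_op_apply (u v : C(Icc a b, ℝ)) (x : Icc a b) :
    op hab P H u x - op hab P H v x
      = ∫ y in (x : ℝ)..b, P (x, y) * (IccExtend hab v y - IccExtend hab u y) := by
  have hu : Continuous (IccExtend hab u) := u.continuous.Icc_extend'
  have hv : Continuous (IccExtend hab v) := v.continuous.Icc_extend'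
  simp_rw [op_apply, mul_sub]
  rw [integral_sub ((by fun_prop : Continuous _).intervalIntegrable _ _)
    ((by fun_prop : Continuous _).intervalIntegrable _ _)]
  ring

variable {P} {M : ℝ} (hM : ∀ z ∈ Icc a b ×ˢ Icc a b, ‖P z‖ ≤ M)
include hM

include hab in
theorem bound_nonneg : 0 ≤ M :=
  (norm_nonneg _).trans (hM (a, a) ⟨left_mem_Icc.2 hab, left_mem_Icc.2 hab⟩)

theorem abs_op_sub_le {u v : C(Icc a b, ℝ)} {C : ℝ} {n : ℕ}
    (huv : ∀ y : Icc a b, |u y - v y| ≤ C * (b - y) ^ n) (x : Icc a b) :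
    |op hab P H u x - op hab P H v x| ≤ M * C * (b - x) ^ (n + 1) / (n + 1) := by
  rw [op_apply_sub_op_apply, mul_div_assoc, ← integral_sub_pow, ← integral_const_mul]
  have hu : Continuous (IccExtend hab u) := u.continuous.Icc_extend'
  have hv : Continuous (IccExtend hab v) := v.continuous.Icc_extend'
  refine (abs_integral_le_integral_abs x.2.2).trans <|
    integral_mono_on x.2.2 (by apply Continuous.intervalIntegrable; fun_prop)
      (by apply Continuous.intervalIntegrable; fun_prop) fun y hy => ?_
  have hy' : y ∈ Icc a b := ⟨x.2.1.trans hy.1, hy.2⟩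
  rw [abs_mul, mul_assoc, IccExtend_of_mem _ _ hy', IccExtend_of_mem _ _ hy', abs_sub_comm]
  exact mul_le_mul (hM (x, y) ⟨x.2, hy'⟩) (huv ⟨y, hy'⟩) (abs_nonneg _)
    ((norm_nonneg _).trans (hM (x, y) ⟨x.2, hy'⟩))

theorem abs_iterate_op_sub_le (u v : C(Icc a b, ℝ)) (n : ℕ) (x : Icc a b) :
    |(op hab P H)^[n] u x - (op hab P H)^[n] v x|
      ≤ M ^ n * dist u v / n ! * (b - x) ^ n := by
  induction n generalizing x with
  | zero => simpa [← Real.dist_eq] using ContinuousMap.dist_apply_le_dist x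
  | succ n ih =>
    simp only [iterate_succ_apply']
    refine (abs_op_sub_le hab H hM ih x).trans_eq ?_
    rw [Nat.factorial_succ]
    push_cast
    field_simp
    ring

theorem dist_iterate_op_le (u v : C(Icc a b, ℝ)) (n : ℕ) :
    dist ((op hab P H)^[n] u) ((op hab P H)^[n] v) ≤ (M * (b - a)) ^ n / n ! * dist u v := by
  have := bound_nonneg hab hM
  refine (ContinuousMap.dist_le (by positivity)).2 fun x => ?_
  rw [Real.dist_eq]
  refine (abs_iterate_op_sub_le hab H hM u v n x).trans ?_
  calc M ^ n * dist u v / n ! * (b - x) ^ n ≤ M ^ n * dist u v / n ! * (b - a) ^ n := by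
        gcongr <;> linarith [x.2.1, x.2.2]
    _ = (M * (b - a)) ^ n / n ! * dist u v := by rw [mul_pow]; ring

theorem exists_isFixedPt_op : ∃ k, IsFixedPt (op hab P H) k := by
  obtain ⟨n, hn⟩ := ((FloorSemiring.tendsto_pow_div_factorial_atTop (M * (b - a))).eventually
    (gt_mem_nhds one_pos)).exists
  have hc : 0 ≤ (M * (b - a)) ^ n / n ! := by
    have := bound_nonneg hab hM
    have := sub_nonneg.2 hab
    positivity
  have hK : ContractingWith ⟨_, hc⟩ (op hab P H)^[n] :=
    ⟨by exact_mod_cast hn, LipschitzWith.of_dist_le_mul (dist_iterate_op_le hab H hM · · n)⟩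
  exact ⟨_, hK.isFixedPt_fixedPoint_iterate⟩

end Volterra

open Volterra in
/-- For `p` continuous on the triangle `T₂ = {(x,y) ∈ [0,1]² : x ≤ y ≤ 1}` and
`h` continuous on `[0,1]`, the Volterra integral equation
`k(x) = h(x) − ∫_x^1 p(x,y) k(y) dy` has a continuous solution `k` on `[0,1]`. -/
theorem stmt2 (p : ℝ → ℝ → ℝ) (h : ℝ → ℝ)
    (hp : ContinuousOn (fun z : ℝ × ℝ => p z.1 z.2)
      {z : ℝ × ℝ | z.1 ∈ Icc (0:ℝ) 1 ∧ z.2 ∈ Icc (0:ℝ) 1 ∧ z.1 ≤ z.2})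
    (hh : ContinuousOn h (Icc (0:ℝ) 1)) :
    ∃ k : ℝ → ℝ, ContinuousOn k (Icc (0:ℝ) 1) ∧
      ∀ x ∈ Icc (0:ℝ) 1, k x = h x - ∫ y in x..1, p x y * k y := by
  obtain ⟨P, hPp⟩ := hp.exists_continuousMap_eqOn <|
    (isClosed_Icc.preimage continuous_fst).inter
      ((isClosed_Icc.preimage continuous_snd).inter (isClosed_le continuous_fst continuous_snd))
  obtain ⟨H, hHh⟩ := hh.exists_continuousMap_eqOn isClosed_Icc
  obtain ⟨M, hM⟩ := (isCompact_Icc.prod isCompact_Icc).exists_bound_of_continuousOn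
    P.continuous.continuousOn
  obtain ⟨k, hk⟩ := exists_isFixedPt_op zero_le_one H hM
  refine ⟨IccExtend zero_le_one k, k.continuous.Icc_extend'.continuousOn, fun x hx => ?_⟩
  rw [IccExtend_of_mem _ _ hx, ← ContinuousMap.congr_fun hk ⟨x, hx⟩, op_apply, hHh hx]
  congr 1
  refine integral_congr fun y hy => ?_
  rw [uIcc_of_le hx.2] at hy
  rw [hPp (show (x, y) ∈ _ from ⟨hx, ⟨hx.1.trans hy.1, hy.2⟩, hy.1⟩)]
end

section
/- Let μ ∈ ℝ be such that μ ≠ k²π² for every nonnegative integer k. Then for every continuous function v : [0,1] → ℝ there exists exactly one twice continuously differentiable function u : [0,1] → ℝ satisfying u''(x) + μ u(x) = v(x) for all x ∈ [0,1] and the Neumann boundary conditions u'(0) = u'(1) = 0. -/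
/-!
Subtracting two solutions reduces uniqueness to the homogeneous problem. Let `c` solve
`c'' + μ c = 0`, `c(0) = 1`, `c'(0) = 0`, i.e. `c = cos (√μ x)` or `c = cosh (√(-μ) x)`; then
`c'(1) ≠ 0` is exactly the condition `μ ≠ k²π²`. By uniqueness for the initial value problem
(Grönwall), a homogeneous solution with `u'(0) = 0` equals `u(0) c`, and `u'(1) = u(0) c'(1) = 0`
forces `u(0) = 0`. For existence, variation of parameters with `c` and the solution `s` with
`s(0) = 0`, `s'(0) = 1` (their Wronskian is constantly `1`) gives a solution satisfying `u'(0) = 0`,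
and adding a multiple of `c` achieves `u'(1) = 0`.
-/

open Set Real

/-- `u` is a `C²` solution on `[0,1]` (with one-sided derivatives at the endpoints) of the
forced Neumann problem `u'' + μ u = v`, `u'(0) = u'(1) = 0`; `u'` and `u''` are the
first and second derivative functions. -/
def IsNeumannSolution (μ : ℝ) (v u u' u'' : ℝ → ℝ) : Prop :=
  (∀ x ∈ Icc (0:ℝ) 1, HasDerivWithinAt u (u' x) (Icc (0:ℝ) 1) x) ∧
  (∀ x ∈ Icc (0:ℝ) 1, HasDerivWithinAt u' (u'' x) (Icc (0:ℝ) 1) x) ∧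
  ContinuousOn u'' (Icc (0:ℝ) 1) ∧
  (∀ x ∈ Icc (0:ℝ) 1, u'' x + μ * u x = v x) ∧
  u' 0 = 0 ∧ u' 1 = 0

def IsOscillatorSolution (μ : ℝ) (f f' : ℝ → ℝ) : Prop :=
  ∀ x, HasDerivAt f (f' x) x ∧ HasDerivAt f' (-μ * f x) x

namespace IsOscillatorSolution

variable {μ : ℝ} {f f' g g' : ℝ → ℝ}

theorem continuous (h : IsOscillatorSolution μ f f') : Continuous f :=
  continuous_iff_continuousAt.2 fun x => (h x).1.continuousAt

theorem wronskian_eq (hf : IsOscillatorSolution μ f f') (hg : IsOscillatorSolution μ g g')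
    (x : ℝ) : g' x * f x - f' x * g x = g' 0 * f 0 - f' 0 * g 0 := by
  have hW : ∀ y, HasDerivAt (fun y => g' y * f y - f' y * g y) 0 y := fun y =>
    (((hg y).2.mul (hf y).1).sub ((hf y).2.mul (hg y).1)).congr_deriv (by ring)
  exact is_const_of_deriv_eq_zero (fun y => (hW y).differentiableAt) (fun y => (hW y).deriv) x 0

end IsOscillatorSolution

section Oscillators

variable (ω : ℝ)

theorem isOscillatorSolution_cos :
    IsOscillatorSolution (ω ^ 2) (fun x => cos (ω * x)) (fun x => -ω * sin (ω * x)) := fun x =>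
  ⟨(hasDerivAt_const_mul (x := x) ω).cos.congr_deriv (by ring),
    ((hasDerivAt_const_mul (x := x) ω).sin.const_mul (-ω)).congr_deriv (by ring)⟩

theorem isOscillatorSolution_sin_div (hω : ω ≠ 0) :
    IsOscillatorSolution (ω ^ 2) (fun x => sin (ω * x) / ω) (fun x => cos (ω * x)) := fun x =>
  ⟨((hasDerivAt_const_mul (x := x) ω).sin.div_const ω).congr_deriv (by field_simp),
    (hasDerivAt_const_mul (x := x) ω).cos.congr_deriv (by field_simp)⟩

theorem isOscillatorSolution_cosh :
    IsOscillatorSolution (-ω ^ 2) (fun x => cosh (ω * x)) (fun x => ω * sinh (ω * x)) := fun x =>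
  ⟨(hasDerivAt_const_mul (x := x) ω).cosh.congr_deriv (by ring),
    ((hasDerivAt_const_mul (x := x) ω).sinh.const_mul ω).congr_deriv (by ring)⟩

theorem isOscillatorSolution_sinh_div (hω : ω ≠ 0) :
    IsOscillatorSolution (-ω ^ 2) (fun x => sinh (ω * x) / ω) (fun x => cosh (ω * x)) := fun x =>
  ⟨((hasDerivAt_const_mul (x := x) ω).sinh.div_const ω).congr_deriv (by field_simp),
    (hasDerivAt_const_mul (x := x) ω).cosh.congr_deriv (by field_simp)⟩

end Oscillators

theorem sin_ne_zero_of_sq_ne {ω : ℝ} (hω : ∀ k : ℕ, ω ^ 2 ≠ (k : ℝ) ^ 2 * π ^ 2) : sin ω ≠ 0 := by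
  intro h
  obtain ⟨n, hn⟩ := sin_eq_zero_iff.1 h
  apply hω n.natAbs
  rw [Nat.cast_natAbs, Int.cast_abs, sq_abs, ← hn]
  ring

structure NeumannFundamentalPair (μ : ℝ) where
  c : ℝ → ℝ
  c' : ℝ → ℝ
  s : ℝ → ℝ
  s' : ℝ → ℝ
  isOscillatorSolution_c : IsOscillatorSolution μ c c'
  isOscillatorSolution_s : IsOscillatorSolution μ s s'
  c_zero : c 0 = 1
  c'_zero : c' 0 = 0
  s_zero : s 0 = 0
  s'_zero : s' 0 = 1
  c'_one_ne_zero : c' 1 ≠ 0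

theorem nonempty_neumannFundamentalPair {μ : ℝ} (hμ : ∀ k : ℕ, μ ≠ (k : ℝ) ^ 2 * π ^ 2) :
    Nonempty (NeumannFundamentalPair μ) := by
  rcases lt_or_gt_of_ne (by simpa using hμ 0 : μ ≠ 0) with hneg | hpos
  · obtain ⟨ω, hω, rfl⟩ : ∃ ω, 0 < ω ∧ μ = -ω ^ 2 :=
      ⟨√(-μ), sqrt_pos.2 (neg_pos.2 hneg), by rw [sq_sqrt (neg_nonneg.2 hneg.le), neg_neg]⟩
    exact ⟨⟨_, _, _, _, isOscillatorSolution_cosh ω, isOscillatorSolution_sinh_div ω hω.ne',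
      by simp, by simp, by simp, by simp, by simp [hω.ne']⟩⟩
  · obtain ⟨ω, hω, rfl⟩ : ∃ ω, 0 < ω ∧ μ = ω ^ 2 := ⟨√μ, sqrt_pos.2 hpos, (sq_sqrt hpos.le).symm⟩
    exact ⟨⟨_, _, _, _, isOscillatorSolution_cos ω, isOscillatorSolution_sin_div ω hω.ne',
      by simp, by simp, by simp, by simp, by simp [hω.ne', sin_ne_zero_of_sq_ne hμ]⟩⟩

theorem eqOn_zero_of_hasDerivWithinAt_oscillator {μ a b : ℝ} {g g' : ℝ → ℝ}
    (hg : ∀ x ∈ Icc a b, HasDerivWithinAt g (g' x) (Icc a b) x)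
    (hg' : ∀ x ∈ Icc a b, HasDerivWithinAt g' (-μ * g x) (Icc a b) x)
    (ha : g a = 0) (ha' : g' a = 0) : EqOn g 0 (Icc a b) ∧ EqOn g' 0 (Icc a b) := by
  -- `(g, g')` solves the linear system `Y' = L Y`, so Grönwall applies with constant `‖L‖`.
  let L : ℝ × ℝ →L[ℝ] ℝ × ℝ :=
    (ContinuousLinearMap.snd ℝ ℝ ℝ).prod (-μ • ContinuousLinearMap.fst ℝ ℝ ℝ)
  have hF : ∀ x ∈ Icc a b, (g x, g' x) = 0 :=
    eq_zero_of_abs_deriv_le_mul_abs_self_of_eq_zero_right (f' := fun x => L (g x, g' x))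
      (fun x hx => ((hg x hx).continuousWithinAt.prodMk (hg' x hx).continuousWithinAt))
      (fun x hx =>
        ((hg x (Ico_subset_Icc_self hx)).mono_of_mem_nhdsWithin (Icc_mem_nhdsGE_of_mem hx)).prodMk
          ((hg' x (Ico_subset_Icc_self hx)).mono_of_mem_nhdsWithin (Icc_mem_nhdsGE_of_mem hx)))
      (by simp [ha, ha']) (fun x _ => L.le_opNorm _)
  exact ⟨fun x hx => congrArg Prod.fst (hF x hx), fun x hx => congrArg Prod.snd (hF x hx)⟩

namespace IsNeumannSolution

variable {μ : ℝ} {v w u u' u'' u₁ u₁' u₁'' u₂ u₂' u₂'' : ℝ → ℝ}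

theorem sub (h₁ : IsNeumannSolution μ v u₁ u₁' u₁'') (h₂ : IsNeumannSolution μ w u₂ u₂' u₂'') :
    IsNeumannSolution μ (v - w) (u₁ - u₂) (u₁' - u₂') (u₁'' - u₂'') :=
  ⟨fun x hx => (h₁.1 x hx).sub (h₂.1 x hx), fun x hx => (h₁.2.1 x hx).sub (h₂.2.1 x hx),
    h₁.2.2.1.sub h₂.2.2.1,
    fun x hx => by simp only [Pi.sub_apply, ← h₁.2.2.2.1 x hx, ← h₂.2.2.2.1 x hx]; ring,
    by simp [h₁.2.2.2.2.1, h₂.2.2.2.2.1], by simp [h₁.2.2.2.2.2, h₂.2.2.2.2.2]⟩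

theorem congr_forcing (h : IsNeumannSolution μ v u u' u'') (hvw : EqOn v w (Icc 0 1)) :
    IsNeumannSolution μ w u u' u'' :=
  ⟨h.1, h.2.1, h.2.2.1, fun x hx => (h.2.2.2.1 x hx).trans (hvw hx), h.2.2.2.2⟩

end IsNeumannSolution

namespace NeumannFundamentalPair

variable {μ : ℝ}

theorem wronskian (P : NeumannFundamentalPair μ) (x : ℝ) :
    P.s' x * P.c x - P.c' x * P.s x = 1 := by
  simpa [P.c_zero, P.c'_zero, P.s_zero, P.s'_zero] using
    P.isOscillatorSolution_c.wronskian_eq P.isOscillatorSolution_s x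

theorem exists_isNeumannSolution_of_continuous (P : NeumannFundamentalPair μ) {v : ℝ → ℝ}
    (hv : Continuous v) : ∃ u u' u'' : ℝ → ℝ, IsNeumannSolution μ v u u' u'' := by
  have hc := P.isOscillatorSolution_c
  have hs := P.isOscillatorSolution_s
  set C : ℝ → ℝ := fun x => ∫ t in (0 : ℝ)..x, P.c t * v t
  set S : ℝ → ℝ := fun x => ∫ t in (0 : ℝ)..x, P.s t * v t
  have hC x : HasDerivAt C (P.c x * v x) x :=
    ((hc.continuous.mul hv).integral_hasStrictDerivAt 0 x).hasDerivAt
  have hS x : HasDerivAt S (P.s x * v x) x :=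
    ((hs.continuous.mul hv).integral_hasStrictDerivAt 0 x).hasDerivAt
  set A : ℝ := (P.c' 1 * S 1 - P.s' 1 * C 1) / P.c' 1
  set u : ℝ → ℝ := fun x => A * P.c x + (P.s x * C x - P.c x * S x)
  set u' : ℝ → ℝ := fun x => A * P.c' x + (P.s' x * C x - P.c' x * S x)
  have hu x : HasDerivAt u (u' x) x :=
    (((hc x).1.const_mul A).add (((hs x).1.mul (hC x)).sub ((hc x).1.mul (hS x)))).congr_deriv
      (by ring)
  have hu' x : HasDerivAt u' (v x - μ * u x) x :=
    (((hc x).2.const_mul A).add (((hs x).2.mul (hC x)).sub ((hc x).2.mul (hS x)))).congr_deriv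
      (by linear_combination v x * P.wronskian x)
  refine ⟨u, u', fun x => v x - μ * u x, fun x _ => (hu x).hasDerivWithinAt,
    fun x _ => (hu' x).hasDerivWithinAt,
    (hv.sub (continuous_const.mul
      (continuous_iff_continuousAt.2 fun x => (hu x).continuousAt))).continuousOn,
    fun x _ => sub_add_cancel _ _, ?_, ?_⟩
  · simp [u', P.c'_zero, C, S]
  · simp only [u', A]
    field_simp [P.c'_one_ne_zero]
    ring

theorem exists_isNeumannSolution (P : NeumannFundamentalPair μ) {v : ℝ → ℝ}
    (hv : ContinuousOn v (Icc 0 1)) : ∃ u u' u'' : ℝ → ℝ, IsNeumannSolution μ v u u' u'' := by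
  obtain ⟨u, u', u'', hu⟩ :=
    P.exists_isNeumannSolution_of_continuous (hv.domRestrict.Icc_extend' (h := zero_le_one))
  exact ⟨u, u', u'', hu.congr_forcing fun x hx => IccExtend_of_mem _ _ hx⟩

theorem eqOn_zero_of_isNeumannSolution (P : NeumannFundamentalPair μ) {u u' u'' : ℝ → ℝ}
    (h : IsNeumannSolution μ 0 u u' u'') : EqOn u 0 (Icc 0 1) := by
  obtain ⟨hu, hu', -, heq, hu'0, hu'1⟩ := h
  simp only [Pi.zero_apply] at heq
  set a := u 0
  obtain ⟨hg, hg'⟩ := eqOn_zero_of_hasDerivWithinAt_oscillator (μ := μ)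
    (g := fun x => u x - a * P.c x) (g' := fun x => u' x - a * P.c' x)
    (fun x hx => (hu x hx).sub ((P.isOscillatorSolution_c x).1.const_mul a).hasDerivWithinAt)
    (fun x hx => ((hu' x hx).sub ((P.isOscillatorSolution_c x).2.const_mul a).hasDerivWithinAt
      ).congr_deriv (by linear_combination heq x hx))
    (by simp [a, P.c_zero]) (by simp [hu'0, P.c'_zero])
  have ha : a = 0 := by
    have h1 := hg' (right_mem_Icc.2 zero_le_one)
    simp only [hu'1, Pi.zero_apply, zero_sub, neg_eq_zero] at h1
    exact (mul_eq_zero.1 h1).resolve_right P.c'_one_ne_zero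
  intro x hx
  simpa [ha, sub_eq_zero] using hg hx

end NeumannFundamentalPair

/-- If `μ ≠ k²π²` for every `k ∈ ℕ`, then for every continuous `v` on `[0,1]`
the forced Neumann problem `u'' + μu = v`, `u'(0) = u'(1) = 0` has exactly one `C²`
solution on `[0,1]`. -/
theorem stmt6 (μ : ℝ) (hμ : ∀ k : ℕ, μ ≠ (k : ℝ) ^ 2 * π ^ 2)
    (v : ℝ → ℝ) (hv : ContinuousOn v (Icc (0:ℝ) 1)) :
    (∃ u u' u'' : ℝ → ℝ, IsNeumannSolution μ v u u' u'') ∧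
    (∀ u₁ u₁' u₁'' u₂ u₂' u₂'' : ℝ → ℝ,
      IsNeumannSolution μ v u₁ u₁' u₁'' → IsNeumannSolution μ v u₂ u₂' u₂'' →
        EqOn u₁ u₂ (Icc (0:ℝ) 1)) := by
  obtain ⟨P⟩ := nonempty_neumannFundamentalPair hμ
  refine ⟨P.exists_isNeumannSolution hv, fun u₁ u₁' u₁'' u₂ u₂' u₂'' h₁ h₂ x hx => ?_⟩
  have hdiff := P.eqOn_zero_of_isNeumannSolution (sub_self v ▸ h₁.sub h₂) hx
  exact sub_eq_zero.1 hdiff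
end

section
/- Let n ≥ 1, let A ∈ ℝ^{n×n} be the upper-shift matrix (A_{i,i+1} = 1 for 1 ≤ i ≤ n−1 and all other entries zero) and let B ∈ ℝ^n be the standard basis vector with last entry 1 and all other entries 0. Let c ∈ ℝ, let k ≥ 1 be an integer, and set λ_k = c − k²π²; assume λ_k ≠ 0. Define u_k(x) = cos(kπx) and Y ∈ ℝ^n by Y_i = λ_k^{−(n+1−i)} for 1 ≤ i ≤ n (so Y = (λ_k^{−n}, λ_k^{−n+1}, …, λ_k^{−1})). Then: (i) A·Y + B·u_k(0) = λ_k Y; (ii) u_k''(x) + c·u_k(x) = λ_k u_k(x) for all x ∈ [0,1]; (iii) u_k'(0) = u_k'(1) = 0. -/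
open Set Real Matrix

/-!
`Y` is the geometric vector `(λ⁻ⁿ, …, λ⁻¹)`: the shift `A` moves each entry one step up, which
is multiplication by `λ`, and the last entry `λ⁻¹` is completed to `λ · λ⁻¹ = 1` by
`u_k(0) B = B`. The heat part is the computation `(cos (a x))'' = -a² cos (a x)` with `a = kπ`,
whose first derivative `-a sin (a x)` vanishes at `0` and at `1` since `sin (kπ) = 0`.
-/

theorem deriv_cos_mul_left (a : ℝ) :
    deriv (fun x => cos (a * x)) = fun x => -a * sin (a * x) := by
  funext x
  rw [deriv_comp_mul_left a cos x, Real.deriv_cos, smul_eq_mul, neg_mul, mul_neg]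

theorem deriv_sin_mul_left (a : ℝ) :
    deriv (fun x => sin (a * x)) = fun x => a * cos (a * x) := by
  funext x
  rw [deriv_comp_mul_left a sin x, Real.deriv_sin, smul_eq_mul]

theorem deriv_deriv_cos_mul_left (a : ℝ) :
    deriv (deriv fun x => cos (a * x)) = fun x => -a ^ 2 * cos (a * x) := by
  rw [deriv_cos_mul_left, deriv_const_mul_field', deriv_sin_mul_left]
  funext x
  ring

theorem mulVec_apply_of_superdiag {R : Type*} [NonAssocSemiring R] {n : ℕ}
    {A : Matrix (Fin n) (Fin n) R}
    (hA : ∀ i j : Fin n, A i j = if (i : ℕ) + 1 = (j : ℕ) then 1 else 0)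
    (v : Fin n → R) (i : Fin n) :
    (A *ᵥ v) i = if h : (i : ℕ) + 1 < n then v ⟨i + 1, h⟩ else 0 := by
  simp only [mulVec, dotProduct, hA, ite_mul, one_mul, zero_mul]
  split_ifs with h
  · have hcond (j : Fin n) : (i : ℕ) + 1 = j ↔ (⟨i + 1, h⟩ : Fin n) = j := by
      simp [Fin.ext_iff]
    simp_rw [hcond, Finset.sum_ite_eq, Finset.mem_univ, if_true]
  · refine Finset.sum_eq_zero fun j _ => if_neg ?_
    omega

theorem superdiag_mulVec_add_eq_smul_of_zpow {K : Type*} [Field K] {n : ℕ}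
    {A : Matrix (Fin n) (Fin n) K}
    (hA : ∀ i j : Fin n, A i j = if (i : ℕ) + 1 = (j : ℕ) then 1 else 0)
    {B : Fin n → K} (hB : ∀ i : Fin n, B i = if (i : ℕ) = n - 1 then 1 else 0)
    {lam : K} (hlam : lam ≠ 0) {Y : Fin n → K}
    (hY : ∀ i : Fin n, Y i = lam ^ (-((n : ℤ) - ((i : ℕ) : ℤ)))) :
    A *ᵥ Y + B = lam • Y := by
  funext i
  simp only [Pi.add_apply, Pi.smul_apply, smul_eq_mul, mulVec_apply_of_superdiag hA, hB, hY]
  split_ifs with hnext hlast hlast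
  · omega
  · rw [add_zero, ← zpow_one_add₀ hlam]
    congr 1
    push_cast
    ring
  · rw [zero_add, ← zpow_one_add₀ hlam, show 1 + -((n : ℤ) - ((i : ℕ) : ℤ)) = 0 by omega,
      zpow_zero]
  · omega

theorem stmt7_general (n : ℕ) (A : Matrix (Fin n) (Fin n) ℝ) (B : Fin n → ℝ)
    (hA : ∀ i j : Fin n, A i j = if (i : ℕ) + 1 = (j : ℕ) then 1 else 0)
    (hB : ∀ i : Fin n, B i = if (i : ℕ) = n - 1 then 1 else 0)
    (c : ℝ) (k : ℕ) (lam : ℝ)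
    (hlam : lam = c - (k : ℝ) ^ 2 * π ^ 2) (hne : lam ≠ 0)
    (u : ℝ → ℝ) (hu : ∀ x : ℝ, u x = Real.cos ((k : ℝ) * π * x))
    (Y : Fin n → ℝ) (hY : ∀ i : Fin n, Y i = lam ^ (-(((n : ℤ)) - ((i : ℕ) : ℤ)))) :
    (A.mulVec Y + u 0 • B = lam • Y) ∧
    (∀ x ∈ Icc (0:ℝ) 1, deriv (deriv u) x + c * u x = lam * u x) ∧
    deriv u 0 = 0 ∧ deriv u 1 = 0 := by
  have hu_eq : u = fun x => cos (k * π * x) := funext hu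
  refine ⟨?_, fun x _ => ?_, ?_, ?_⟩
  · rw [hu, mul_zero, cos_zero, one_smul]
    exact superdiag_mulVec_add_eq_smul_of_zpow hA hB hne hY
  · simp only [hu_eq, deriv_deriv_cos_mul_left, hlam]
    ring
  · simp [hu_eq, deriv_cos_mul_left]
  · simp [hu_eq, deriv_cos_mul_left, sin_nat_mul_pi]

/-- For the Brunovsky pair `(A, B)` (upper-shift matrix and last standard basis
vector), `c ∈ ℝ`, `k ≥ 1`, `λ_k = c − k²π² ≠ 0`, `u_k(x) = cos(kπx)` and
`Y = (λ_k^{−n}, …, λ_k^{−1})`, one has: (i) `A·Y + u_k(0)·B = λ_k Y`;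
(ii) `u_k'' + c u_k = λ_k u_k` on `[0,1]`; (iii) `u_k'(0) = u_k'(1) = 0`. -/
theorem stmt7 (n : ℕ) (hn : 1 ≤ n) (A : Matrix (Fin n) (Fin n) ℝ) (B : Fin n → ℝ)
    (hA : ∀ i j : Fin n, A i j = if (i : ℕ) + 1 = (j : ℕ) then 1 else 0)
    (hB : ∀ i : Fin n, B i = if (i : ℕ) = n - 1 then 1 else 0)
    (c : ℝ) (k : ℕ) (hk : 1 ≤ k) (lam : ℝ)
    (hlam : lam = c - (k : ℝ) ^ 2 * π ^ 2) (hne : lam ≠ 0)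
    (u : ℝ → ℝ) (hu : ∀ x : ℝ, u x = Real.cos ((k : ℝ) * π * x))
    (Y : Fin n → ℝ) (hY : ∀ i : Fin n, Y i = lam ^ (-(((n : ℤ)) - ((i : ℕ) : ℤ)))) :
    (A.mulVec Y + u 0 • B = lam • Y) ∧
    (∀ x ∈ Icc (0:ℝ) 1, deriv (deriv u) x + c * u x = lam * u x) ∧
    deriv u 0 = 0 ∧ deriv u 1 = 0 :=
  stmt7_general n A B hA hB c k lam hlam hne u hu Y hY
end
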